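/- Let G be a group admitting a nonempty strongly aperiodic SFT X ⊆ A^G defined by a finite set F ⊆ G and L ⊆ A^F. Then the subgroup H = ⟨F⟩ is finitely generated and the SFT Y ⊆ A^H defined by (F, L) on H is nonempty and satisfies: for every g ∈ G with g ≠ 1, there exist t ∈ G and an integer n > 0 with (t g t⁻¹)^n ∈ Free(Y). -/

import Mathlib

variable {G A : Type*}

/-- The left shift action of a group on configurations: `(shift g x) h = x (g⁻¹ * h)`. -/
def shift [Group G] (g : G) (x : G → A) : G → A := fun h => x (g⁻¹ * h)

/-- The subshift of finite type on `G` defined by the shape `F` and the pattern set `L`: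
all configurations `x` such that for every `g`, the restriction of `g • x` to `F` lies in `L`. -/
def SFT [Group G] (F : Set G) (L : Set (F → A)) : Set (G → A) :=
  {x | ∀ g : G, (fun f : F => shift g x f) ∈ L}

/-- The subshift of finite type on the subgroup `H` defined by the shape `F ⊆ H`
and the pattern set `L`. -/
def SFTon [Group G] (H : Subgroup G) (F : Set G) (hF : F ⊆ (H : Set G)) (L : Set (F → A)) :
    Set (↥H → A) :=
  {y | ∀ h : ↥H, (fun f : F => y (h⁻¹ * ⟨(f : G), hF f.2⟩)) ∈ L}

/-- The free part of a subshift: elements acting freely on every configuration. -/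
def freePart [Group G] (X : Set (G → A)) : Set G := {g | ∀ x ∈ X, shift g x ≠ x}

/-!
The first two claims are immediate: `⟨F⟩` is generated by the finite set `F`, and the restriction
to `H = ⟨F⟩` of any `x ∈ X` lies in `Y`. For the third, suppose that no conjugate of `g ≠ 1` has a
positive power in `Free(Y)`. For each `d ∈ G`, the elements of `H` that `d` conjugates into `⟨g⟩`
form a subgroup of the cyclic group `⟨d⁻¹ g d⟩`, hence are the powers of some `(d⁻¹ g d) ^ n`, and
by assumption some `y_d ∈ Y` is fixed by it. Setting `x (κ d h) = y_d h` for `κ ∈ ⟨g⟩`, `h ∈ H` and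
`d` running over representatives of the double cosets `⟨g⟩ \ G / H` is well defined exactly because
of this invariance, and produces a point of `X` fixed by `g`, contradicting strong aperiodicity.
-/

section

variable [Group G]

theorem shift_one (x : G → A) : shift 1 x = x := by
  funext h
  simp [shift]

theorem shift_mul (a b : G) (x : G → A) : shift (a * b) x = shift a (shift b x) := by
  funext h
  simp [shift, mul_assoc]

def shiftStabilizer (x : G → A) : Subgroup G where
  carrier := {g | shift g x = x}
  one_mem' := shift_one x
  mul_mem' {a b} (ha : shift a x = x) (hb : shift b x = x) :=
    show shift (a * b) x = x by rw [shift_mul, hb, ha]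
  inv_mem' {a} (ha : shift a x = x) :=
    show shift a⁻¹ x = x by conv_lhs => rw [← ha, ← shift_mul, inv_mul_cancel, shift_one]

theorem mem_shiftStabilizer {x : G → A} {g : G} : g ∈ shiftStabilizer x ↔ shift g x = x :=
  Iff.rfl

theorem restrict_mem_SFTon {F : Set G} {L : Set (F → A)} (H : Subgroup G) (hF : F ⊆ H)
    {x : G → A} (hx : x ∈ SFT F L) : (fun h : H => x h) ∈ SFTon H F hF L := by
  intro h
  simpa [shift] using hx h

theorem exists_doubleCoset_rep (K H : Subgroup G) :
    ∃ rep : G → G, (∀ u, ∀ κ ∈ K, ∀ h ∈ H, rep (κ * u * h) = rep u) ∧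
      ∀ u, ∃ κ ∈ K, ∃ h ∈ H, u = κ * rep u * h := by
  refine ⟨fun u => (DoubleCoset.mk K H u).out, fun u κ hκ h hh => ?_, fun u => ?_⟩
  · exact congrArg Quotient.out
      ((DoubleCoset.eq K H _ _).mpr ⟨κ⁻¹, K.inv_mem hκ, h⁻¹, H.inv_mem hh, by group⟩)
  · obtain ⟨κ, h, hκ, hh, hout⟩ := DoubleCoset.mk_out_eq_mul K H u
    exact ⟨κ⁻¹, K.inv_mem hκ, h⁻¹, H.inv_mem hh, by simp only [hout]; group⟩

/-- Gluing along the double cosets `K \ G / H`. -/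
theorem exists_mem_SFT_forall_shift_eq {F : Set G} {L : Set (F → A)} (H K : Subgroup G)
    (hF : F ⊆ H)
    (hfixed : ∀ d : G, ∃ y ∈ SFTon H F hF L, ∀ k : H, d * k * d⁻¹ ∈ K → shift k y = y) :
    ∃ x ∈ SFT F L, ∀ g ∈ K, shift g x = x := by
  choose y hyY hyfix using hfixed
  obtain ⟨rep, rep_eq, exists_decomp⟩ := exists_doubleCoset_rep K H
  choose κ hκ h hh hdecomp using exists_decomp
  set x : G → A := fun u => y (rep u) ⟨h u, hh u⟩
  have value_eq : ∀ u, ∀ κ' ∈ K, ∀ h' : H, u = κ' * rep u * h' → x u = y (rep u) h' := by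
    intro u κ' hκ' h' hu
    have hconj : rep u * ↑(⟨h u, hh u⟩ * h'⁻¹ : H) * (rep u)⁻¹ = (κ u)⁻¹ * κ' := by
      calc rep u * ↑(⟨h u, hh u⟩ * h'⁻¹ : H) * (rep u)⁻¹
          = (κ u)⁻¹ * (κ u * rep u * h u) * (h' : G)⁻¹ * (rep u)⁻¹ := by push_cast; group
        _ = (κ u)⁻¹ * (κ' * rep u * h') * (h' : G)⁻¹ * (rep u)⁻¹ := by rw [← hdecomp u, ← hu]
        _ = (κ u)⁻¹ * κ' := by group
    have := congrFun (hyfix _ _ (hconj ▸ K.mul_mem (K.inv_mem (hκ u)) hκ')) ⟨h u, hh u⟩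
    simpa [shift] using this.symm
  refine ⟨x, fun t => ?_, fun g hg => funext fun u => ?_⟩
  · have hrep (f : F) : rep (t⁻¹ * f) = rep t⁻¹ := by
      simpa using rep_eq t⁻¹ 1 K.one_mem f (hF f.2)
    have hdecomp' (f : F) :
        t⁻¹ * f = κ t⁻¹ * rep (t⁻¹ * f) * ↑(⟨h t⁻¹, hh t⁻¹⟩ * ⟨f, hF f.2⟩ : H) := by
      rw [hrep]
      conv_lhs => rw [hdecomp t⁻¹]
      simp [mul_assoc]
    have hval (f : F) : x (t⁻¹ * f) = y (rep t⁻¹) (⟨h t⁻¹, hh t⁻¹⟩ * ⟨f, hF f.2⟩) := by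
      rw [value_eq _ _ (hκ t⁻¹) _ (hdecomp' f), hrep]
    simpa [shift, hval] using hyY (rep t⁻¹) ⟨h t⁻¹, hh t⁻¹⟩⁻¹
  · have hrep : rep (g⁻¹ * u) = rep u := by
      simpa using rep_eq u g⁻¹ (K.inv_mem hg) 1 H.one_mem
    have hdecomp' : g⁻¹ * u = g⁻¹ * κ u * rep (g⁻¹ * u) * h u := by
      rw [hrep, mul_assoc g⁻¹, mul_assoc g⁻¹, ← hdecomp]
    show x (g⁻¹ * u) = x u
    rw [value_eq _ _ (K.mul_mem (K.inv_mem hg) (hκ u)) ⟨h u, hh u⟩ hdecomp', hrep]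

theorem exists_forall_conj_mem_zpowers_shift_eq {H : Subgroup G} {Y : Set (H → A)}
    (hY : Y.Nonempty) (g d : G)
    (hfix : ∀ n : ℕ, 0 < n → ∀ k : H, (k : G) = (d⁻¹ * g * d) ^ n → k ∉ freePart Y) :
    ∃ y ∈ Y, ∀ k : H, d * k * d⁻¹ ∈ Subgroup.zpowers g → shift k y = y := by
  set a := d⁻¹ * g * d
  obtain ⟨n, hn⟩ := (Subgroup.le_zpowers_iff a (H ⊓ Subgroup.zpowers a)).mp inf_le_right
  have hpow_mem : a ^ n ∈ H := (hn ▸ Subgroup.mem_zpowers (a ^ n) : a ^ n ∈ H ⊓ _).1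
  obtain ⟨y, hyY, hy⟩ : ∃ y ∈ Y, shift (⟨a ^ n, hpow_mem⟩ : H) y = y := by
    rcases n.eq_zero_or_pos with rfl | hn0
    · obtain ⟨y, hy⟩ := hY
      refine ⟨y, hy, ?_⟩
      convert shift_one y
      simp
    · simpa [freePart] using hfix n hn0 ⟨a ^ n, hpow_mem⟩ rfl
  refine ⟨y, hyY, fun k hk => ?_⟩
  have hk_zpowers : (k : G) ∈ Subgroup.zpowers a := by
    obtain ⟨m, hm⟩ := Subgroup.mem_zpowers_iff.mp hk
    refine ⟨m, show a ^ m = k from ?_⟩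
    rw [show a = d⁻¹ * g * d⁻¹⁻¹ by rw [inv_inv], conj_zpow, hm]
    group
  have hk_pow : (k : G) ∈ Subgroup.zpowers (a ^ n) := hn ▸ ⟨k.2, hk_zpowers⟩
  obtain ⟨m, hm⟩ := Subgroup.mem_zpowers_iff.mp hk_pow
  have hk_eq : k = ⟨a ^ n, hpow_mem⟩ ^ m := Subtype.ext (by simp [hm])
  exact mem_shiftStabilizer.mp (hk_eq ▸ (shiftStabilizer y).zpow_mem hy m)

end

theorem closure_fg_and_cond_of_SA_general
    {G A : Type*} [Group G] (F : Set G) (hFfin : F.Finite) (L : Set (F → A))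
    (hXne : (SFT F L).Nonempty)
    (hSA : ∀ x ∈ SFT F L, ∀ g : G, shift g x = x → g = 1) :
    (Subgroup.closure F).FG ∧
    (SFTon (Subgroup.closure F) F Subgroup.subset_closure L).Nonempty ∧
    ∀ g : G, g ≠ 1 → ∃ t : G, ∃ n : ℕ, 0 < n ∧
      ∃ k : ↥(Subgroup.closure F), (k : G) = (t * g * t⁻¹) ^ n ∧
        k ∈ freePart (SFTon (Subgroup.closure F) F Subgroup.subset_closure L) := by
  obtain ⟨x, hx⟩ := hXne
  have hY : (SFTon (Subgroup.closure F) F Subgroup.subset_closure L).Nonempty :=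
    ⟨_, restrict_mem_SFTon _ Subgroup.subset_closure hx⟩
  refine ⟨(Subgroup.fg_iff _).mpr ⟨F, rfl, hFfin⟩, hY, fun g hg => ?_⟩
  by_contra! hcon
  obtain ⟨x', hx', hperiodic⟩ := exists_mem_SFT_forall_shift_eq _ (Subgroup.zpowers g)
    Subgroup.subset_closure fun d => exists_forall_conj_mem_zpowers_shift_eq hY g d
      fun n hn k hk => hcon d⁻¹ n hn k (by simpa using hk)
  exact hg (hSA x' hx' g (hperiodic g (Subgroup.mem_zpowers g)))

/-- If the SFT `X` defined by `(F, L)` on `G` is nonempty and strongly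
aperiodic, then `H = ⟨F⟩` is finitely generated, the SFT `Y` defined by `(F, L)` on `H` is
nonempty, and every nontrivial `g ∈ G` has a conjugate with a positive power in `Free(Y)`. -/
theorem closure_fg_and_cond_of_SA
    {G A : Type*} [Group G] [Finite A] (F : Set G) (hFfin : F.Finite) (L : Set (F → A))
    (hXne : (SFT F L).Nonempty)
    (hSA : ∀ x ∈ SFT F L, ∀ g : G, shift g x = x → g = 1) :
    (Subgroup.closure F).FG ∧
    (SFTon (Subgroup.closure F) F Subgroup.subset_closure L).Nonempty ∧
    ∀ g : G, g ≠ 1 → ∃ t : G, ∃ n : ℕ, 0 < n ∧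
      ∃ k : ↥(Subgroup.closure F), (k : G) = (t * g * t⁻¹) ^ n ∧
        k ∈ freePart (SFTon (Subgroup.closure F) F Subgroup.subset_closure L) :=
  closure_fg_and_cond_of_SA_general F hFfin L hXne hSA
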